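/- arXiv:1301.6903 — 2 statements merged into one kernel-verified Lean document; each statement's English description precedes it below -/
import Mathlib

section
/- With F(q,s,η) = q(η³/3 − ρ(q,s)η) and ρ satisfying: ∂ρ/∂s(q,s) = 0 only when s = 0, the double points of the associated immersed Lagrangian Σ_F occur only at points with s = 0 and with η₀ = ±√ρ(q,0) satisfying η₀³/3 − ρ(q,0)η₀ − q(∂ρ/∂q)(q,0)·η₀ = 0 with both signs of η₀ giving the same (p₁,p₂). Equivalently, double points correspond exactly to critical points of the function g(q) = q·ρ(q,0)^{3/2} (up to constant factor), so if g has exactly one interior critical point with ρ(q,0) > 0 there, then Σ_F has exactly one double point. -/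
/-- `p₁ = η³/3 − ρη − q(∂ρ/∂q)η`. -/
noncomputable def p1F (ρ : ℝ × ℝ → ℝ) (q s η : ℝ) : ℝ :=
  η ^ 3 / 3 - ρ (q, s) * η - q * fderiv ℝ ρ (q, s) (1, 0) * η

/-- `p₂ = −q(∂ρ/∂s)η`. -/
noncomputable def p2F (ρ : ℝ × ℝ → ℝ) (q s η : ℝ) : ℝ :=
  -(q * fderiv ℝ ρ (q, s) (0, 1) * η)

/-- A double point of `Σ_F`: two distinct parameters `(q,s,η) ≠ (q',s',η')` on the
fiberwise critical locus `{η² = ρ(q,s), q > 0}` with the same image `(q,s,p₁,p₂)`. -/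
noncomputable def DP (ρ : ℝ × ℝ → ℝ) (a b : ℝ × ℝ × ℝ) : Prop :=
  a ≠ b ∧ 0 < a.1 ∧ 0 < b.1 ∧
  a.2.2 ^ 2 = ρ (a.1, a.2.1) ∧ b.2.2 ^ 2 = ρ (b.1, b.2.1) ∧
  a.1 = b.1 ∧ a.2.1 = b.2.1 ∧
  p1F ρ a.1 a.2.1 a.2.2 = p1F ρ b.1 b.2.1 b.2.2 ∧
  p2F ρ a.1 a.2.1 a.2.2 = p2F ρ b.1 b.2.1 b.2.2

lemma p1F_neg (ρ : ℝ × ℝ → ℝ) (q s η : ℝ) : p1F ρ q s (-η) = -p1F ρ q s η := by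
  unfold p1F; ring

lemma deriv_g (ρ : ℝ × ℝ → ℝ) (hρ : ContDiff ℝ (⊤ : ℕ∞) ρ) (q : ℝ) (hA : 0 < ρ (q, 0)) :
    deriv (fun q' => q' * Real.sqrt (ρ (q', 0)) ^ 3) q
      = Real.sqrt (ρ (q, 0)) * (ρ (q, 0) + 3 / 2 * (q * fderiv ℝ ρ (q, 0) (1, 0))) := by
  set A := ρ (q, 0) with hAdef
  set c := fderiv ℝ ρ (q, 0) (1, 0) with hcdef
  have hf : HasDerivAt (fun q' : ℝ => ρ (q', 0)) c q := by
    have h1 : HasFDerivAt ρ (fderiv ℝ ρ (q, 0)) (q, 0) :=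
      (hρ.differentiable (by simp) (q, 0)).hasFDerivAt
    have h2 : HasDerivAt (fun q' : ℝ => (q', (0 : ℝ))) ((1 : ℝ), (0 : ℝ)) q :=
      (hasDerivAt_id q).prodMk (hasDerivAt_const q 0)
    simpa [Function.comp_def] using h1.comp_hasDerivAt q h2
  have hsq : HasDerivAt (fun q' : ℝ => Real.sqrt (ρ (q', 0))) (c / (2 * Real.sqrt A)) q :=
    hf.sqrt hA.ne'
  have hpow := hsq.pow 3
  have hmul := (hasDerivAt_id q).mul hpow
  simp only [id, Pi.pow_apply] at hmul
  rw [show (fun q' : ℝ => q' * Real.sqrt (ρ (q', 0)) ^ 3) = id * (fun q' => Real.sqrt (ρ (q', 0))) ^ 3 from rfl, hmul.deriv]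
  have hs2 : Real.sqrt A ^ 2 = A := Real.sq_sqrt hA.le
  have hsne : Real.sqrt A ≠ 0 := (Real.sqrt_pos.mpr hA).ne'
  have h3 : Real.sqrt A ^ 3 = A * Real.sqrt A := by
    rw [pow_succ, hs2]
  field_simp
  rw [← hAdef]; linear_combination (2 * Real.sqrt A ^ 2) * hs2

/-- Structure of double points. -/
lemma dp_struct (ρ : ℝ × ℝ → ℝ)
    (hs : ∀ q s : ℝ, 0 < q → (fderiv ℝ ρ (q, s) (0, 1) = 0 ↔ s = 0))
    (a b : ℝ × ℝ × ℝ) (h : DP ρ a b) :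
    a.2.1 = 0 ∧ b = (a.1, 0, -a.2.2) ∧ p1F ρ a.1 0 a.2.2 = 0 := by
  obtain ⟨q, s, η⟩ := a
  obtain ⟨q', s', η'⟩ := b
  obtain ⟨hne, hq, hq', hη, hη', hqq, hss, hp1, hp2⟩ := h
  simp only at hne hq hq' hη hη' hqq hss hp1 hp2 ⊢
  subst hqq; subst hss
  -- η' = -η
  have hηsq : η' ^ 2 = η ^ 2 := by rw [hη, hη']
  have hηne : η' ≠ η := by
    intro h; exact hne (by simp [h])
  have hηeq : η' = -η := by
    rcases sq_eq_sq_iff_eq_or_eq_neg.mp hηsq with h | h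
    · exact absurd h hηne
    · linarith [h]
  subst hηeq
  have hη0 : η ≠ 0 := by
    intro h; subst h; simp at hηne
  -- ∂ρ/∂s = 0 from p2
  have hc : fderiv ℝ ρ (q, s) (0, 1) = 0 := by
    unfold p2F at hp2
    have : q * fderiv ℝ ρ (q, s) (0, 1) * η = 0 := by linarith [hp2]
    rcases mul_eq_zero.mp this with h | h
    · rcases mul_eq_zero.mp h with h | h
      · exact absurd h hq.ne'
      · exact h
    · exact absurd h hη0
  have hs0 : s = 0 := (hs q s hq).mp hc
  subst hs0
  refine ⟨rfl, rfl, ?_⟩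
  have := hp2
  rw [p1F_neg] at hp1
  linarith [hp1]

lemma dp_iff (ρ : ℝ × ℝ → ℝ) (hρ : ContDiff ℝ (⊤ : ℕ∞) ρ)
    (hs : ∀ q s : ℝ, 0 < q → (fderiv ℝ ρ (q, s) (0, 1) = 0 ↔ s = 0))
    (q : ℝ) (hq : 0 < q) (hA : 0 < ρ (q, 0)) :
    (∃ η : ℝ, DP ρ (q, 0, η) (q, 0, -η)) ↔
      deriv (fun q' => q' * Real.sqrt (ρ (q', 0)) ^ 3) q = 0 := by
  rw [deriv_g ρ hρ q hA]
  set A := ρ (q, 0) with hAdef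
  set c := fderiv ℝ ρ (q, 0) (1, 0) with hcdef
  have hsA : Real.sqrt A > 0 := Real.sqrt_pos.mpr hA
  constructor
  · rintro ⟨η, h⟩
    obtain ⟨-, -, hp1⟩ := dp_struct ρ hs _ _ h
    have hη0 : η ≠ 0 := by
      rintro rfl
      exact h.1 (by simp)
    have hηsq : η ^ 2 = A := h.2.2.2.1
    simp only at hp1
    unfold p1F at hp1
    have hcond : A + 3 / 2 * (q * c) = 0 := by
      have : η * (η ^ 2 / 3 - A - q * c) = 0 := by rw [hAdef, hcdef]; linear_combination hp1
      rcases mul_eq_zero.mp this with h' | h'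
      · exact absurd h' hη0
      · rw [hηsq] at h'; linarith
    rw [hcond, mul_zero]
  · intro hd
    have hcond : A + 3 / 2 * (q * c) = 0 := by
      rcases mul_eq_zero.mp hd with h | h
      · exact absurd h hsA.ne'
      · exact h
    refine ⟨Real.sqrt A, ?_, hq, hq, ?_, ?_, rfl, rfl, ?_, ?_⟩
    · intro h
      have := congrArg (fun x : ℝ × ℝ × ℝ => x.2.2) h
      simp only at this
      linarith
    · simpa using Real.sq_sqrt hA.le
    · simpa using Real.sq_sqrt hA.le
    · have hp0 : p1F ρ q 0 (Real.sqrt A) = 0 := by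
        unfold p1F
        rw [← hcdef, ← hAdef]
        have h2 : Real.sqrt A ^ 2 = A := Real.sq_sqrt hA.le
        have h3 : Real.sqrt A ^ 3 = A * Real.sqrt A := by rw [pow_succ, h2]
        rw [h3]
        nlinarith [hcond]
      simp only [p1F_neg, hp0, neg_zero]
    · have hc0 : fderiv ℝ ρ (q, 0) (0, 1) = 0 := (hs q 0 hq).mpr rfl
      unfold p2F
      rw [hc0]
      ring

/-- If `∂ρ/∂s = 0` only at `s = 0`, then double points of `Σ_F` occur only at `s = 0`,
with `η' = −η` and `η³/3 − ρη − q(∂ρ/∂q)η = 0`; for `ρ(q,0) > 0` they correspond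
exactly to critical points of `g(q) = q·ρ(q,0)^{3/2}`; and if `g` has exactly one
interior critical point with `ρ(q,0) > 0` there, then `Σ_F` has exactly one double
point (normalized so that the first parameter has `η > 0`). -/
theorem stmt10 (ρ : ℝ × ℝ → ℝ) (hρ : ContDiff ℝ (⊤ : ℕ∞) ρ)
    (hs : ∀ q s : ℝ, 0 < q → (fderiv ℝ ρ (q, s) (0, 1) = 0 ↔ s = 0)) :
    (∀ a b : ℝ × ℝ × ℝ, DP ρ a b →
      a.2.1 = 0 ∧ b = (a.1, 0, -a.2.2) ∧ p1F ρ a.1 0 a.2.2 = 0) ∧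
    (∀ q : ℝ, 0 < q → 0 < ρ (q, 0) →
      ((∃ η : ℝ, DP ρ (q, 0, η) (q, 0, -η)) ↔
        deriv (fun q' => q' * Real.sqrt (ρ (q', 0)) ^ 3) q = 0)) ∧
    ((∃! q : ℝ, 0 < q ∧ 0 < ρ (q, 0) ∧
        deriv (fun q' => q' * Real.sqrt (ρ (q', 0)) ^ 3) q = 0) →
      ∃! x : (ℝ × ℝ × ℝ) × (ℝ × ℝ × ℝ), DP ρ x.1 x.2 ∧ 0 < x.1.2.2) := by
  refine ⟨dp_struct ρ hs, fun q hq hA => dp_iff ρ hρ hs q hq hA, ?_⟩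
  rintro ⟨q₀, ⟨hq₀, hA₀, hd₀⟩, huniq⟩
  have hex := (dp_iff ρ hρ hs q₀ hq₀ hA₀).mpr hd₀
  -- the witness η can be taken to be √(ρ(q₀,0)) > 0; extract a positive one
  obtain ⟨η₀, hdp₀⟩ := hex
  -- From the structure lemma, η₀ ≠ 0; wlog η₀ > 0 by symmetry
  have hη₀sq : η₀ ^ 2 = ρ (q₀, 0) := hdp₀.2.2.2.1
  have hη₀ne : η₀ ≠ 0 := by
    rintro rfl
    exact hdp₀.1 (by simp)
  -- normalize: use |η₀|
  have hdp' : DP ρ (q₀, 0, |η₀|) (q₀, 0, -|η₀|) := by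
    rcases abs_choice η₀ with h | h
    · rwa [h]
    · rw [h]
      obtain ⟨hne, h1, h2, h3, h4, h5, h6, h7, h8⟩ := hdp₀
      exact ⟨by simpa [neg_neg] using hne.symm, h2, h1, by simpa using h4,
        by simpa using h3, h5.symm, h6.symm, by simpa [neg_neg] using h7.symm,
        by simpa [neg_neg] using h8.symm⟩
  refine ⟨((q₀, 0, |η₀|), (q₀, 0, -|η₀|)), ⟨hdp', abs_pos.mpr hη₀ne⟩, ?_⟩
  rintro ⟨⟨q, s, η⟩, b⟩ ⟨hdp, hηpos⟩
  obtain ⟨hs0, hb, hp1⟩ := dp_struct ρ hs _ _ hdp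
  simp only at hs0 hb hp1 hηpos
  subst hs0
  have hq : 0 < q := hdp.2.1
  have hηsq : η ^ 2 = ρ (q, 0) := hdp.2.2.2.1
  have hA : 0 < ρ (q, 0) := by rw [← hηsq]; positivity
  have hdpq : DP ρ (q, 0, η) (q, 0, -η) := by rw [← hb]; exact hdp
  have hd : deriv (fun q' => q' * Real.sqrt (ρ (q', 0)) ^ 3) q = 0 :=
    (dp_iff ρ hρ hs q hq hA).mp ⟨η, hdpq⟩
  have hqeq : q = q₀ := huniq q ⟨hq, hA, hd⟩
  subst hqeq
  have hηeq : η = |η₀| := by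
    have h1 : η = Real.sqrt (ρ (q, 0)) := by
      rw [← hηsq, Real.sqrt_sq hηpos.le]
    have h2 : |η₀| = Real.sqrt (ρ (q, 0)) := by
      rw [← hη₀sq, Real.sqrt_sq_eq_abs]
    rw [h1, h2]
  rw [hb, hηeq]
end

section
/- The function g(q) = q·ρ(q,0) on (0,∞), where ρ(q,0) is smooth and positive, coincides with ρ₋(0)·q for q small; in particular g is strictly increasing near 0, so any smooth choice of ρ interpolating between ρ₋ (with ρ₋(0) > 0) and ρ₊ (with ρ₊(0) < 0) forces g to have at least one interior local maximum, hence the associated Lagrangian Σ_F necessarily has at least one double point. -/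
lemma aux_max (f : ℝ → ℝ) (hf : Continuous f) (l u : ℝ) (hl : 0 < l) (hlu : l ≤ u)
    (hleft : ∀ q, 0 < q → q ≤ l → f q ≤ f l) (hright : ∀ q, u < q → f q ≤ 0)
    (hfl : 0 < f l) :
    ∃ q₀, 0 < q₀ ∧ 0 < f q₀ ∧ IsLocalMax f q₀ := by
  obtain ⟨q₀, hq₀, hmax⟩ := isCompact_Icc.exists_isMaxOn (Set.nonempty_Icc.2 hlu)
    hf.continuousOn
  have hlmem : l ∈ Set.Icc l u := Set.left_mem_Icc.2 hlu
  have hfq₀ : 0 < f q₀ := lt_of_lt_of_le hfl (hmax hlmem)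
  refine ⟨q₀, lt_of_lt_of_le hl hq₀.1, hfq₀, ?_⟩
  have : Set.Ioi (0:ℝ) ∈ nhds q₀ := Ioi_mem_nhds (lt_of_lt_of_le hl hq₀.1)
  filter_upwards [this] with q hq
  rcases le_or_gt q l with h | h
  · exact le_trans (hleft q hq h) (hmax hlmem)
  · rcases le_or_gt q u with h' | h'
    · exact hmax ⟨le_of_lt h, h'⟩
    · exact le_trans (hright q h') (le_of_lt hfq₀)

/-- With `ρ(q,0) = ρ₋(0) > 0` for small `q` and `ρ(q,0) = ρ₊(0) < 0` for large `q`,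
the function `g(q) = q·ρ(q,0)` equals `ρ₋(0)·q` for small `q`, hence is strictly
increasing near `0`; since it is eventually negative it must attain a positive
interior local maximum, and consequently the Lagrangian `Σ_F` associated to the
generating family `F(q,s,η) = q(η³/3 − ρ(q,s)η)` has at least one double point. -/
theorem stmt18 (ρ : ℝ × ℝ → ℝ) (hρ : ContDiff ℝ (⊤ : ℕ∞) ρ) (T : ℝ) (hT : 1 < T)
    (cm cp : ℝ) (hcm : 0 < cm) (hcp : cp < 0)
    (h1 : ∀ q : ℝ, 0 < q → q < 1 / T → ρ (q, 0) = cm)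
    (h2 : ∀ q : ℝ, T < q → ρ (q, 0) = cp)
    (hs : ∀ q : ℝ, 0 < q → fderiv ℝ ρ (q, 0) (0, 1) = 0) :
    (∀ q : ℝ, 0 < q → q < 1 / T → q * ρ (q, 0) = cm * q) ∧
    StrictMonoOn (fun q : ℝ => q * ρ (q, 0)) (Set.Ioo 0 (1 / T)) ∧
    (∃ q₀ : ℝ, 0 < q₀ ∧ 0 < ρ (q₀, 0) ∧
      IsLocalMax (fun q : ℝ => q * ρ (q, 0)) q₀) ∧
    (∃ a b : ℝ × ℝ × ℝ, DP ρ a b) := by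
  have hT0 : (0:ℝ) < T := lt_trans one_pos hT
  have hl0 : (0:ℝ) < 1 / (2 * T) := by positivity
  have hlT : 1 / (2 * T) < 1 / T := by
    rw [div_lt_div_iff₀ (by positivity) hT0]; nlinarith
  have hT1 : 1 / T < 1 := by rw [div_lt_one hT0]; exact hT
  have hlu : 1 / (2 * T) ≤ T + 1 := by nlinarith
  set r : ℝ → ℝ := fun q => ρ (q, 0) with hr
  have hrc : Continuous r := hρ.continuous.comp (continuous_id.prodMk continuous_const)
  have hrd : ∀ q : ℝ, HasDerivAt r (fderiv ℝ ρ (q, 0) (1, 0)) q := by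
    intro q
    exact ((hρ.differentiable (by simp) (q, 0)).hasFDerivAt).comp_hasDerivAt q
      ((hasDerivAt_id q).prodMk (hasDerivAt_const q 0))
  have part1 : ∀ q : ℝ, 0 < q → q < 1 / T → q * ρ (q, 0) = cm * q := by
    intro q hq hq'; rw [h1 q hq hq', mul_comm]
  have part2 : StrictMonoOn (fun q : ℝ => q * ρ (q, 0)) (Set.Ioo 0 (1 / T)) := by
    intro a ha b hb hab
    simp only [part1 a ha.1 ha.2, part1 b hb.1 hb.2]
    exact mul_lt_mul_of_pos_left hab hcm
  have part3 : ∃ q₀ : ℝ, 0 < q₀ ∧ 0 < ρ (q₀, 0) ∧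
      IsLocalMax (fun q : ℝ => q * ρ (q, 0)) q₀ := by
    obtain ⟨q₀, hq₀, hfq₀, hloc⟩ := aux_max (fun q => q * r q)
      (continuous_id.mul hrc) (1 / (2 * T)) (T + 1) hl0 hlu
      (fun q hq hq' => by
        show q * r q ≤ 1 / (2 * T) * r (1 / (2 * T))
        rw [show r q = cm from h1 q hq (lt_of_le_of_lt hq' hlT),
          show r (1 / (2 * T)) = cm from h1 _ hl0 hlT]
        nlinarith)
      (fun q hq => by
        show q * r q ≤ 0
        rw [show r q = cp from h2 q (by nlinarith)]
        nlinarith)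
      (by
        show 0 < 1 / (2 * T) * r (1 / (2 * T))
        rw [show r (1 / (2 * T)) = cm from h1 _ hl0 hlT]; positivity)
    exact ⟨q₀, hq₀, by simpa using lt_of_le_of_lt (le_refl _) (by nlinarith : (0:ℝ) < r q₀), hloc⟩
  refine ⟨part1, part2, part3, ?_⟩
  -- Part 4: find a critical point of h(q) = q · r(q) · √(r(q))
  obtain ⟨q₀, hq₀, hhq₀, hloc⟩ := aux_max (fun q => q * r q * Real.sqrt (r q))
    ((continuous_id.mul hrc).mul hrc.sqrt) (1 / (2 * T)) (T + 1) hl0 hlu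
    (fun q hq hq' => by
      show q * r q * Real.sqrt (r q) ≤ 1 / (2 * T) * r (1 / (2 * T)) * Real.sqrt (r (1 / (2 * T)))
      rw [show r q = cm from h1 q hq (lt_of_le_of_lt hq' hlT),
        show r (1 / (2 * T)) = cm from h1 _ hl0 hlT]
      have h0 : (0:ℝ) ≤ Real.sqrt cm := Real.sqrt_nonneg _
      nlinarith [mul_nonneg (mul_nonneg (sub_nonneg.2 hq') (le_of_lt hcm)) h0])
    (fun q hq => by
      show q * r q * Real.sqrt (r q) ≤ 0
      rw [show r q = cp from h2 q (by nlinarith),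
        Real.sqrt_eq_zero_of_nonpos (le_of_lt hcp), mul_zero])
    (by
      show 0 < 1 / (2 * T) * r (1 / (2 * T)) * Real.sqrt (r (1 / (2 * T)))
      rw [show r (1 / (2 * T)) = cm from h1 _ hl0 hlT]
      have := Real.sqrt_pos.2 hcm
      positivity)
  have hsq : (0:ℝ) ≤ Real.sqrt (r q₀) := Real.sqrt_nonneg _
  have hrpos : 0 < r q₀ := by
    by_contra hneg
    push_neg at hneg
    rw [Real.sqrt_eq_zero_of_nonpos hneg, mul_zero] at hhq₀
    exact lt_irrefl 0 hhq₀
  set D := fderiv ℝ ρ (q₀, 0) (1, 0) with hD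
  have hsqrt : HasDerivAt (fun q => Real.sqrt (r q)) (D / (2 * Real.sqrt (r q₀))) q₀ :=
    (hrd q₀).sqrt (ne_of_gt hrpos)
  have hderiv : HasDerivAt (fun q => q * r q * Real.sqrt (r q))
      ((1 * r q₀ + q₀ * D) * Real.sqrt (r q₀)
        + (q₀ * r q₀) * (D / (2 * Real.sqrt (r q₀)))) q₀ :=
    ((hasDerivAt_id q₀).mul (hrd q₀)).mul hsqrt
  have hzero := hloc.hasDerivAt_eq_zero hderiv
  set s := Real.sqrt (r q₀) with hsdef
  have hspos : 0 < s := Real.sqrt_pos.2 hrpos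
  have hs2 : s ^ 2 = r q₀ := Real.sq_sqrt (le_of_lt hrpos)
  have key : q₀ * D = -(2/3) * r q₀ := by
    have h2s : D / (2 * s) * (2 * s) = D := div_mul_cancel₀ D (by positivity)
    have := congrArg (· * (2 * s)) hzero
    simp only [add_mul, mul_assoc, h2s, zero_mul] at this
    nlinarith [this, hs2, hspos, hq₀]
  -- build the double point
  refine ⟨(q₀, 0, s), (q₀, 0, -s), ?_, hq₀, hq₀, ?_, ?_, rfl, rfl, ?_, ?_⟩
  · intro h
    have := congrArg (fun x : ℝ × ℝ × ℝ => x.2.2) h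
    simp at this
    linarith
  · exact hs2
  · simpa using hs2
  · show p1F ρ q₀ 0 s = p1F ρ q₀ 0 (-s)
    unfold p1F
    rw [← hD]
    have hs3 : s ^ 3 = r q₀ * s := by nlinarith [hs2]
    have : ρ (q₀, 0) = r q₀ := rfl
    rw [this]
    nlinarith [key, hs3]
  · show p2F ρ q₀ 0 s = p2F ρ q₀ 0 (-s)
    unfold p2F
    rw [hs q₀ hq₀]
    ring
end
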